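/- Let n ≥ 1 be an integer and let y₁, …, y_n : ℝ → ℝ be differentiable functions; extend them by y₀ = y_{n+1} := 0. Suppose that for every k with 1 ≤ k ≤ n and every t ∈ ℝ one has y_k′(t) = −d⁺_{2k}·y_{k−1}(t) + (d⁺_{2k} − d⁺_{2k+2})·y_k(t) + d⁺_{2k+2}·y_{k+1}(t), where d⁺_j := (j−2)²·(j+2)/(4j²). Then for every t ∈ ℝ, (d/dt)(∑_{k=1}^{n} y_k(t)²) ≤ −(3/4)·∑_{k=1}^{n} y_k(t)². -/

import Mathlib

/-!
Differentiating `∑ y_k²` gives `2 ∑ y_k y_k'`. The off-diagonal part of the system is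
skew-symmetric (`y_{k+1}` enters `y_k'` with weight `d⁺_{2k+2}`, `y_k` enters `y_{k+1}'` with
weight `−d⁺_{2k+2}`), so its contribution telescopes to boundary terms that vanish because
`y₀ = y_{n+1} = 0`. What remains is `2 ∑ (d⁺_{2k} − d⁺_{2k+2}) y_k²`, and each diagonal
coefficient is at most `−3/8`.
-/

noncomputable def dPlus (j : ℕ) : ℝ :=
  ((j : ℝ) - 2) ^ 2 * ((j : ℝ) + 2) / (4 * (j : ℝ) ^ 2)

open Finset

/-- With `k = 1` the bound is an equality, so `3/8` is optimal. -/
lemma dPlus_two_mul_sub_dPlus_two_mul_add_two_le {k : ℕ} (hk : 1 ≤ k) :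
    dPlus (2 * k) - dPlus (2 * k + 2) ≤ -(3 / 8) := by
  have hx : (1 : ℝ) ≤ k := by exact_mod_cast hk
  have hdPlus_even : ∀ m : ℕ, 1 ≤ (m : ℝ) →
      dPlus (2 * m) = ((m : ℝ) - 1) ^ 2 * ((m : ℝ) + 1) / (2 * (m : ℝ) ^ 2) := by
    intro m hm
    rw [dPlus]
    field_simp
    push_cast
    ring
  have hk1 : 2 * k + 2 = 2 * (k + 1) := by ring
  rw [hk1, hdPlus_even k hx, hdPlus_even (k + 1) (by push_cast; linarith),
    div_sub_div _ _ (by positivity) (by positivity), div_le_iff₀ (by positivity)]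
  push_cast
  -- cleared of denominators, the claim is `0 ≤ k⁴ + 2k³ + 5k² − 4k − 4 = (k − 1)(k³ + 3k² + 8k + 4)`
  nlinarith [mul_nonneg (sub_nonneg.mpr hx) (by positivity : (0 : ℝ) ≤ k ^ 3 + 3 * k ^ 2 + 8 * k + 4)]

lemma sum_Icc_mul_skew_tridiagonal (a x : ℕ → ℝ) (n : ℕ) :
    ∑ k ∈ Icc 1 n, x k * (a k * x (k + 1) - a (k - 1) * x (k - 1)) =
      a n * x n * x (n + 1) - a 0 * x 0 * x 1 := by
  induction n with
  | zero => simp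
  | succ n ih =>
    rw [sum_Icc_succ_top (by omega), ih, Nat.add_sub_cancel]
    ring

lemma hasDerivAt_sum_sq_of_tridiagonal {a c : ℕ → ℝ} {y : ℕ → ℝ → ℝ} {n : ℕ} {t : ℝ}
    (hy0 : y 0 t = 0) (hyn : y (n + 1) t = 0)
    (hODE : ∀ k ∈ Icc 1 n, HasDerivAt (y k)
      (-a (k - 1) * y (k - 1) t + c k * y k t + a k * y (k + 1) t) t) :
    HasDerivAt (fun s => ∑ k ∈ Icc 1 n, y k s ^ 2) (2 * ∑ k ∈ Icc 1 n, c k * y k t ^ 2) t := by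
  have hskew := sum_Icc_mul_skew_tridiagonal a (fun k => y k t) n
  simp only [hy0, hyn, mul_zero, zero_mul, sub_zero] at hskew
  refine (HasDerivAt.fun_sum fun k hk => (hODE k hk).pow 2).congr_deriv ?_
  calc ∑ k ∈ Icc 1 n, ((2 : ℕ) : ℝ) * y k t ^ (2 - 1) *
        (-a (k - 1) * y (k - 1) t + c k * y k t + a k * y (k + 1) t)
      = 2 * ∑ k ∈ Icc 1 n, c k * y k t ^ 2 +
          2 * ∑ k ∈ Icc 1 n, y k t * (a k * y (k + 1) t - a (k - 1) * y (k - 1) t) := by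
        rw [← mul_add, ← sum_add_distrib, mul_sum]
        refine sum_congr rfl fun k _ => ?_
        push_cast
        ring
    _ = 2 * ∑ k ∈ Icc 1 n, c k * y k t ^ 2 := by rw [hskew, mul_zero, add_zero]

theorem galerkin_decay_plus_even_general
    (n : ℕ)
    (y : ℕ → ℝ → ℝ)
    (hy0 : ∀ t, y 0 t = 0)
    (hyn1 : ∀ t, y (n + 1) t = 0)
    (hODE : ∀ k : ℕ, 1 ≤ k → k ≤ n → ∀ t : ℝ,
      HasDerivAt (y k)
        (-(dPlus (2 * k)) * y (k - 1) t + (dPlus (2 * k) - dPlus (2 * k + 2)) * y k t +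
          dPlus (2 * k + 2) * y (k + 1) t) t) :
    ∀ t : ℝ,
      deriv (fun s => ∑ k ∈ Finset.Icc 1 n, y k s ^ 2) t ≤
        -(3 / 4) * ∑ k ∈ Finset.Icc 1 n, y k t ^ 2 := by
  intro t
  have hderiv := hasDerivAt_sum_sq_of_tridiagonal (a := fun k => dPlus (2 * k + 2))
    (c := fun k => dPlus (2 * k) - dPlus (2 * k + 2)) (hy0 t) (hyn1 t) fun k hk => by
      obtain ⟨hk1, hkn⟩ := mem_Icc.mp hk
      have hindex : 2 * (k - 1) + 2 = 2 * k := by omega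
      simpa only [hindex] using hODE k hk1 hkn t
  rw [hderiv.deriv, mul_sum, mul_sum]
  refine sum_le_sum fun k hk => ?_
  have hgap := dPlus_two_mul_sub_dPlus_two_mul_add_two_le (mem_Icc.mp hk).1
  nlinarith [sq_nonneg (y k t)]

/-- Galerkin version of the exponential stability of the linearized `η⁺`-evolution on even
modes: if `y_k′ = −d⁺_{2k} y_{k−1} + (d⁺_{2k} − d⁺_{2k+2}) y_k + d⁺_{2k+2} y_{k+1}` for
`1 ≤ k ≤ n`, with `y₀ = y_{n+1} = 0`, then
`(d/dt) ∑_{k=1}^n y_k² ≤ −(3/4)·∑_{k=1}^n y_k²`. -/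
theorem galerkin_decay_plus_even
    (n : ℕ) (hn : 1 ≤ n)
    (y : ℕ → ℝ → ℝ)
    (hy0 : ∀ t, y 0 t = 0)
    (hyn1 : ∀ t, y (n + 1) t = 0)
    (hODE : ∀ k : ℕ, 1 ≤ k → k ≤ n → ∀ t : ℝ,
      HasDerivAt (y k)
        (-(dPlus (2 * k)) * y (k - 1) t + (dPlus (2 * k) - dPlus (2 * k + 2)) * y k t +
          dPlus (2 * k + 2) * y (k + 1) t) t) :
    ∀ t : ℝ,
      deriv (fun s => ∑ k ∈ Finset.Icc 1 n, y k s ^ 2) t ≤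
        -(3 / 4) * ∑ k ∈ Finset.Icc 1 n, y k t ^ 2 :=
  galerkin_decay_plus_even_general n y hy0 hyn1 hODE
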